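/- arXiv:math/0310350 — 2 statements merged into one kernel-verified Lean document; each statement's English description precedes it below -/
import Mathlib

section
/- For every r > 0, the function S_r(z) = lim_{N→∞} Σ_{k=-N}^{N} (e^{2kr} + z)/(e^{2kr} − z) defines a meromorphic function on ℂ \ {0} whose poles are exactly the simple poles at the points e^{2kr}, k ∈ ℤ. -/
/-!
Put `q = e^{2r}`, so that the poles are the powers `q^k`. Pair the terms `k` and `-k`: the first is
`1 + O(‖z‖ / ‖q‖^n)` and the second `-1 + O(1 / (‖z‖ ‖q‖^n))`, so on each annulus `ρ ≤ ‖z‖ ≤ R`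
all but finitely many pairs have no pole and are bounded by a geometric sequence. By the Weierstrass
M-test the tail of the paired series is holomorphic there, and near `q^k` the kernel is
`(q^k + z) / (q^k - z)` plus a function holomorphic at `q^k`.
-/

open Complex Filter Topology

/-- Partial symmetric sums of the annulus Schwarz kernel
`S_r(z) = lim_{N→∞} Σ_{k=-N}^{N} (e^{2kr}+z)/(e^{2kr}-z)`. -/
noncomputable def annulusSum (r : ℝ) (z : ℂ) (N : ℕ) : ℂ :=
  ∑ k ∈ Finset.Icc (-(N : ℤ)) (N : ℤ),
    (Complex.exp (2 * (k : ℂ) * (r : ℂ)) + z) / (Complex.exp (2 * (k : ℂ) * (r : ℂ)) - z)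

/-- The set of poles `{e^{2kr} : k ∈ ℤ}`. -/
def annulusPoles (r : ℝ) : Set ℂ :=
  {z | ∃ k : ℤ, z = Complex.exp (2 * (k : ℂ) * (r : ℂ))}

open Finset

theorem sum_Icc_neg_eq_add_sum_range {G : Type*} [AddCommGroup G] (f : ℤ → G) (N : ℕ) :
    ∑ k ∈ Icc (-(N : ℤ)) N, f k = f 0 + ∑ n ∈ range N, (f (n + 1) + f (-(n + 1))) := by
  induction N with
  | zero => simp
  | succ N ih =>
    rw [Nat.cast_succ, sum_Icc_succ_eq_add_endpoints, ih, sum_range_succ]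
    abel

theorem norm_add_div_sub_sub_one_le {a z : ℂ} (ha : a ≠ 0) (h : 2 * ‖z‖ ≤ ‖a‖) :
    ‖(a + z) / (a - z) - 1‖ ≤ 4 * ‖z‖ / ‖a‖ := by
  have ha' : 0 < ‖a‖ := norm_pos_iff.mpr ha
  have hdist : ‖a‖ / 2 ≤ ‖a - z‖ := by linarith [norm_sub_norm_le a z]
  have haz : a - z ≠ 0 := norm_pos_iff.mp (by linarith)
  calc ‖(a + z) / (a - z) - 1‖ = 2 * ‖z‖ / ‖a - z‖ := by
        rw [div_sub_one haz, show a + z - (a - z) = 2 * z by ring, norm_div, norm_mul,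
          Complex.norm_two]
    _ ≤ 2 * ‖z‖ / (‖a‖ / 2) := by gcongr
    _ = 4 * ‖z‖ / ‖a‖ := by ring

theorem norm_add_div_sub_add_inv_le {a z : ℂ} (h₁ : 2 * ‖z‖ ≤ ‖a‖) (h₂ : 2 ≤ ‖z‖ * ‖a‖) :
    ‖(a + z) / (a - z) + (a⁻¹ + z) / (a⁻¹ - z)‖ ≤ 4 * (‖z‖ + ‖z‖⁻¹) / ‖a‖ := by
  have hz : z ≠ 0 := by rintro rfl; norm_num at h₂
  have ha : a ≠ 0 := by rintro rfl; norm_num at h₂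
  have h₂' : 2 * ‖a⁻¹‖ ≤ ‖z‖ := by
    rw [norm_inv, ← div_eq_mul_inv, div_le_iff₀ (norm_pos_iff.mpr ha)]; exact h₂
  have hsplit : (a + z) / (a - z) + (a⁻¹ + z) / (a⁻¹ - z)
      = ((a + z) / (a - z) - 1) - ((z + a⁻¹) / (z - a⁻¹) - 1) := by
    rw [show (a⁻¹ + z) / (a⁻¹ - z) = -((z + a⁻¹) / (z - a⁻¹)) by
      rw [← neg_sub z, div_neg, add_comm]]
    ring
  calc _ ≤ ‖(a + z) / (a - z) - 1‖ + ‖(z + a⁻¹) / (z - a⁻¹) - 1‖ := hsplit ▸ norm_sub_le _ _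
    _ ≤ 4 * ‖z‖ / ‖a‖ + 4 * ‖a⁻¹‖ / ‖z‖ :=
        add_le_add (norm_add_div_sub_sub_one_le ha h₁) (norm_add_div_sub_sub_one_le hz h₂')
    _ = 4 * (‖z‖ + ‖z‖⁻¹) / ‖a‖ := by rw [norm_inv]; field_simp

noncomputable def schwarzTerm (q : ℂ) (k : ℤ) (z : ℂ) : ℂ := (q ^ k + z) / (q ^ k - z)

noncomputable def schwarzPair (q : ℂ) (n : ℕ) (z : ℂ) : ℂ :=
  schwarzTerm q (n + 1) z + schwarzTerm q (-(n + 1)) z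

/-- `S_r = schwarzKernel (e^{2r})`, the terms `k` and `-k` of the symmetric sum being paired. -/
noncomputable def schwarzKernel (q z : ℂ) : ℂ := schwarzTerm q 0 z + ∑' n, schwarzPair q n z

variable {q z : ℂ}

theorem analyticAt_schwarzTerm {k : ℤ} (h : q ^ k ≠ z) : AnalyticAt ℂ (schwarzTerm q k) z :=
  (analyticAt_const.add analyticAt_id).div (analyticAt_const.sub analyticAt_id) (sub_ne_zero.mpr h)

theorem schwarzPair_eq (n : ℕ) (z : ℂ) :
    schwarzPair q n z
      = (q ^ (n + 1) + z) / (q ^ (n + 1) - z) + ((q ^ (n + 1))⁻¹ + z) / ((q ^ (n + 1))⁻¹ - z) := by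
  rw [schwarzPair, schwarzTerm, schwarzTerm, zpow_neg, ← Nat.cast_add_one, zpow_natCast]

theorem analyticAt_schwarzPair {n : ℕ} (h₁ : 2 * ‖z‖ ≤ ‖q‖ ^ (n + 1))
    (h₂ : 2 ≤ ‖z‖ * ‖q‖ ^ (n + 1)) : AnalyticAt ℂ (schwarzPair q n) z := by
  have hpos : q ^ ((n : ℤ) + 1) ≠ z := by
    rintro rfl
    rw [norm_zpow, ← Nat.cast_add_one, zpow_natCast] at h₁ h₂
    nlinarith [pow_nonneg (norm_nonneg q) (n + 1)]
  have hneg : q ^ (-((n : ℤ) + 1)) ≠ z := by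
    rintro rfl
    rw [norm_zpow, zpow_neg, ← Nat.cast_add_one, zpow_natCast] at h₂
    have hq : ‖q‖ ^ (n + 1) ≠ 0 := by rintro h; norm_num [h] at h₂
    rw [inv_mul_cancel₀ hq] at h₂
    norm_num at h₂
  exact (analyticAt_schwarzTerm hpos).add (analyticAt_schwarzTerm hneg)

theorem norm_schwarzPair_le {n : ℕ} (h₁ : 2 * ‖z‖ ≤ ‖q‖ ^ (n + 1))
    (h₂ : 2 ≤ ‖z‖ * ‖q‖ ^ (n + 1)) :
    ‖schwarzPair q n z‖ ≤ 4 * (‖z‖ + ‖z‖⁻¹) * ‖q‖⁻¹ ^ (n + 1) := by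
  rw [← norm_pow] at h₁ h₂
  rw [schwarzPair_eq, inv_pow, ← norm_pow, ← div_eq_mul_inv]
  exact norm_add_div_sub_add_inv_le h₁ h₂

theorem eventually_analyticAt_and_norm_schwarzPair_le (hq : 1 < ‖q‖) {ρ R : ℝ} (hρ : 0 < ρ) :
    ∀ᶠ n in atTop, ∀ z : ℂ, ρ ≤ ‖z‖ → ‖z‖ ≤ R →
      AnalyticAt ℂ (schwarzPair q n) z ∧
        ‖schwarzPair q n z‖ ≤ 4 * (R + ρ⁻¹) * ‖q‖⁻¹ ^ (n + 1) := by
  have hlarge : Tendsto (fun n : ℕ => ‖q‖ ^ (n + 1)) atTop atTop :=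
    (tendsto_pow_atTop_atTop_of_one_lt hq).comp (tendsto_add_atTop_nat 1)
  filter_upwards [hlarge.eventually_ge_atTop (2 * R), hlarge.eventually_ge_atTop (2 / ρ)]
    with n hR hρ' z hρz hzR
  have hzpos : 0 < ‖z‖ := hρ.trans_le hρz
  have h₁ : 2 * ‖z‖ ≤ ‖q‖ ^ (n + 1) := by linarith
  have h₂ : 2 ≤ ‖z‖ * ‖q‖ ^ (n + 1) := by
    rw [div_le_iff₀ hρ] at hρ'
    nlinarith [pow_nonneg (norm_nonneg q) (n + 1)]
  refine ⟨analyticAt_schwarzPair h₁ h₂, (norm_schwarzPair_le h₁ h₂).trans ?_⟩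
  gcongr

theorem summable_schwarzPair (hq : 1 < ‖q‖) (hz : z ≠ 0) : Summable (schwarzPair q · z) := by
  have hz' : 0 < ‖z‖ := norm_pos_iff.mpr hz
  have hgeom : Summable fun n : ℕ => 4 * (‖z‖ + ‖z‖⁻¹) * ‖q‖⁻¹ ^ (n + 1) :=
    ((summable_nat_add_iff 1).mpr (summable_geometric_of_lt_one (by positivity)
      (inv_lt_one_of_one_lt₀ hq))).mul_left _
  refine hgeom.of_norm_bounded_eventually ?_
  rw [Nat.cofinite_eq_atTop]
  filter_upwards [eventually_analyticAt_and_norm_schwarzPair_le hq hz'] with n hn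
  exact (hn z le_rfl le_rfl).2

theorem tendsto_sum_Icc_schwarzTerm (hq : 1 < ‖q‖) (hz : z ≠ 0) :
    Tendsto (fun N : ℕ => ∑ k ∈ Icc (-(N : ℤ)) N, schwarzTerm q k z) atTop
      (𝓝 (schwarzKernel q z)) := by
  simp_rw [sum_Icc_neg_eq_add_sum_range]
  exact (summable_schwarzPair hq hz).hasSum.tendsto_sum_nat.const_add _

theorem schwarzKernel_eq_sum_Icc_add_tsum (hq : 1 < ‖q‖) (hz : z ≠ 0) (M : ℕ) :
    schwarzKernel q z
      = ∑ k ∈ Icc (-(M : ℤ)) M, schwarzTerm q k z + ∑' n, schwarzPair q (n + M) z := by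
  rw [schwarzKernel, ← (summable_schwarzPair hq hz).sum_add_tsum_nat_add M,
    sum_Icc_neg_eq_add_sum_range, add_assoc]
  rfl

theorem eventually_differentiableOn_tsum_schwarzPair_add (hq : 1 < ‖q‖) {ρ R : ℝ} (hρ : 0 < ρ) :
    ∀ᶠ M in atTop, DifferentiableOn ℂ (fun z => ∑' n, schwarzPair q (n + M) z)
      (Metric.ball 0 R \ Metric.closedBall 0 ρ) := by
  obtain ⟨M₀, hM₀⟩ := eventually_atTop.mp (eventually_analyticAt_and_norm_schwarzPair_le hq hρ)
  filter_upwards [eventually_ge_atTop M₀] with M hM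
  have hgeom : Summable fun n : ℕ => 4 * (R + ρ⁻¹) * ‖q‖⁻¹ ^ (n + M + 1) :=
    ((summable_nat_add_iff (M + 1)).mpr (summable_geometric_of_lt_one (by positivity)
      (inv_lt_one_of_one_lt₀ hq))).mul_left _
  have hannulus : ∀ z ∈ Metric.ball (0 : ℂ) R \ Metric.closedBall 0 ρ, ρ ≤ ‖z‖ ∧ ‖z‖ ≤ R := by
    intro z hz
    simp only [Set.mem_sdiff, Metric.mem_ball, Metric.mem_closedBall, dist_zero_right,
      not_le] at hz
    exact ⟨hz.2.le, hz.1.le⟩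
  refine differentiableOn_tsum_of_summable_norm hgeom (fun n z hz => ?_)
    (Metric.isOpen_ball.sdiff Metric.isClosed_closedBall) (fun n z hz => ?_)
  · exact (hM₀ (n + M) (by omega) z (hannulus z hz).1 (hannulus z hz).2).1
      |>.differentiableAt.differentiableWithinAt
  · exact (hM₀ (n + M) (by omega) z (hannulus z hz).1 (hannulus z hz).2).2

theorem eventually_exists_analyticAt_eventuallyEq (hq : 1 < ‖q‖) {z₀ : ℂ} (hz₀ : z₀ ≠ 0) :
    ∀ᶠ M : ℕ in atTop, ∃ T : ℂ → ℂ, AnalyticAt ℂ T z₀ ∧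
      schwarzKernel q =ᶠ[𝓝 z₀] fun z => ∑ k ∈ Icc (-(M : ℤ)) M, schwarzTerm q k z + T z := by
  have hz₀' : 0 < ‖z₀‖ := norm_pos_iff.mpr hz₀
  set A := Metric.ball (0 : ℂ) (2 * ‖z₀‖) \ Metric.closedBall 0 (‖z₀‖ / 2)
  have hA : A ∈ 𝓝 z₀ := by
    refine (Metric.isOpen_ball.sdiff Metric.isClosed_closedBall).mem_nhds ?_
    simp only [Set.mem_sdiff, Metric.mem_ball, Metric.mem_closedBall, dist_zero_right]
    constructor <;> linarith
  filter_upwards [eventually_differentiableOn_tsum_schwarzPair_add hq (R := 2 * ‖z₀‖)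
    (half_pos hz₀')] with M hM
  refine ⟨_, hM.analyticAt hA, ?_⟩
  filter_upwards [hA] with z hz
  refine schwarzKernel_eq_sum_Icc_add_tsum hq (norm_pos_iff.mp ?_) M
  have hz' := hz.2
  simp only [Metric.mem_closedBall, dist_zero_right, not_le] at hz'
  linarith

theorem analyticAt_schwarzKernel (hq : 1 < ‖q‖) (hz : z ≠ 0) (hpoles : ∀ k : ℤ, q ^ k ≠ z) :
    AnalyticAt ℂ (schwarzKernel q) z := by
  obtain ⟨M, T, hT, hEq⟩ := (eventually_exists_analyticAt_eventuallyEq hq hz).exists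
  refine AnalyticAt.congr ?_ hEq.symm
  exact (Finset.analyticAt_fun_sum _ fun k _ => analyticAt_schwarzTerm (hpoles k)).add hT

theorem zpow_ne_zpow_of_one_lt_norm (hq : 1 < ‖q‖) {j k : ℤ} (h : j ≠ k) : q ^ j ≠ q ^ k := by
  intro hjk
  apply h
  apply (zpow_right_strictMono₀ hq).injective
  simpa only [norm_zpow] using congr_arg norm hjk

theorem exists_simple_pole_schwarzKernel (hq : 1 < ‖q‖) (k : ℤ) :
    ∃ g : ℂ → ℂ, AnalyticAt ℂ g (q ^ k) ∧ g (q ^ k) ≠ 0 ∧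
      ∀ᶠ z in 𝓝[≠] (q ^ k), schwarzKernel q z = g z / (z - q ^ k) := by
  set p := q ^ k
  have hp : p ≠ 0 := zpow_ne_zero k (by rintro rfl; norm_num at hq)
  obtain ⟨M, hM, T, hT, hEq⟩ :=
    ((eventually_ge_atTop k.natAbs).and (eventually_exists_analyticAt_eventuallyEq hq hp)).exists
  have hk : k ∈ Icc (-(M : ℤ)) M := by simp only [mem_Icc]; omega
  set rest := fun z => ∑ j ∈ (Icc (-(M : ℤ)) M).erase k, schwarzTerm q j z
  have hrest : AnalyticAt ℂ rest p := Finset.analyticAt_fun_sum _ fun j hj =>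
    analyticAt_schwarzTerm (zpow_ne_zpow_of_one_lt_norm hq (ne_of_mem_erase hj))
  refine ⟨fun z => -(p + z) + (z - p) * (rest z + T z), by fun_prop, ?_, ?_⟩
  · simpa [← two_mul] using hp
  · filter_upwards [nhdsWithin_le_nhds hEq, self_mem_nhdsWithin] with z hz hzp
    have hzp' : z - p ≠ 0 := sub_ne_zero.mpr hzp
    have hpz : p - z ≠ 0 := sub_ne_zero.mpr (Ne.symm hzp)
    change _ = (-(p + z) + (z - p) * (rest z + T z)) / (z - p)
    rw [hz, ← add_sum_erase _ _ hk, show schwarzTerm q k z = (p + z) / (p - z) from rfl]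
    field_simp
    ring

/-- For every `r > 0`, `S_r` defines a meromorphic function on `ℂ \ {0}`
whose poles are exactly the simple poles at the points `e^{2kr}`, `k ∈ ℤ`. -/
theorem stmt0 (r : ℝ) (hr : 0 < r) :
    ∃ S : ℂ → ℂ,
      (∀ z : ℂ, z ≠ 0 → z ∉ annulusPoles r →
        Tendsto (fun N => annulusSum r z N) atTop (𝓝 (S z))) ∧
      (∀ z : ℂ, z ≠ 0 → z ∉ annulusPoles r → AnalyticAt ℂ S z) ∧
      (∀ k : ℤ, ∃ g : ℂ → ℂ,
        AnalyticAt ℂ g (Complex.exp (2 * (k : ℂ) * (r : ℂ))) ∧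
        g (Complex.exp (2 * (k : ℂ) * (r : ℂ))) ≠ 0 ∧
        ∀ᶠ z in 𝓝[≠] (Complex.exp (2 * (k : ℂ) * (r : ℂ))),
          S z = g z / (z - Complex.exp (2 * (k : ℂ) * (r : ℂ)))) := by
  set q := Complex.exp (2 * r)
  have hq : 1 < ‖q‖ := by
    rw [Complex.norm_exp, Real.one_lt_exp_iff]
    simpa using hr
  have hexp (k : ℤ) : Complex.exp (2 * k * r) = q ^ k := by
    rw [← Complex.exp_int_mul]
    ring_nf
  have hpoles {z : ℂ} (hz : z ∉ annulusPoles r) (k : ℤ) : q ^ k ≠ z :=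
    fun h => hz ⟨k, by rw [hexp, h]⟩
  refine ⟨schwarzKernel q, fun z hz hzp => ?_,
    fun z hz hzp => analyticAt_schwarzKernel hq hz (hpoles hzp), fun k => ?_⟩
  · simpa only [annulusSum, hexp, schwarzTerm] using tendsto_sum_Icc_schwarzTerm hq hz
  · simpa only [hexp] using exists_simple_pole_schwarzKernel hq k
end

section
/- For every r > 0 and every z with |z| = e^{-r}, the real part of S_r(z) equals 1. -/
open Complex Filter Topology

/-!
Put `a_k = e^{2kr}`. Since `a_{-k-1} a_k = e^{-2r} = |z|²`, the inversion `a ↦ |z|² / a`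
sends the `k`-th term `w_k = (a_k + z)/(a_k - z)` to `-conj w_k`. Hence the partial sum over
`-N ≤ k ≤ N` is `w_N` plus the purely imaginary `Σ_{k<N} (w_k - conj w_k)`. As
`w_k - 1 = 2z/(a_k - z)` decays geometrically, the imaginary sums converge and `w_N → 1`.
-/

open ComplexConjugate

theorem Finset.sum_Icc_neg_natCast_eq {M : Type*} [AddCommMonoid M] (f : ℤ → M) (N : ℕ) :
    ∑ k ∈ Icc (-(N : ℤ)) N, f k = f N + ∑ k ∈ range N, (f k + f (-(k + 1))) := by
  induction N with
  | zero => simp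
  | succ N ih =>
    have hIcc : Icc (-((N + 1 : ℕ) : ℤ)) (N + 1 : ℕ) =
        insert (-(N + 1 : ℤ)) (insert (N + 1 : ℤ) (Icc (-(N : ℤ)) N)) := by
      ext x
      simp only [mem_Icc, mem_insert]
      omega
    rw [hIcc, sum_insert (by simp only [mem_insert, mem_Icc]; omega),
      sum_insert (by simp only [mem_Icc]; omega), ih, sum_range_succ]
    push_cast
    abel

namespace Complex

theorem conj_ofReal_add_div_ofReal_sub (a : ℝ) (z : ℂ) :
    conj ((a + z) / (a - z)) = (a + conj z) / (a - conj z) := by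
  simp only [map_div₀, map_add, map_sub, conj_ofReal]

theorem ofReal_add_div_ofReal_sub_sub_one {a : ℝ} {z : ℂ} (h : (a : ℂ) ≠ z) :
    (a + z) / (a - z) - 1 = 2 * z / (a - z) := by
  field_simp [sub_ne_zero.mpr h]
  ring

theorem ofReal_add_div_ofReal_sub_of_mul_eq {a b : ℝ} {z : ℂ} (hab : a * b = ‖z‖ ^ 2)
    (ha : (a : ℂ) ≠ conj z) (hb : (b : ℂ) ≠ z) :
    (b + z) / (b - z) = -conj ((a + z) / (a - z)) := by
  have hab' : (a : ℂ) * b = z * conj z := by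
    rw [mul_conj, normSq_eq_norm_sq]; exact_mod_cast hab
  rw [conj_ofReal_add_div_ofReal_sub, neg_div', div_eq_div_iff (sub_ne_zero.mpr hb)
    (sub_ne_zero.mpr ha)]
  linear_combination 2 * hab'

theorem summable_inv_pow_sub {ρ : ℝ} (hρ : 1 < ρ) {z : ℂ} (hz : ‖z‖ < 1) :
    Summable fun k : ℕ => ((ρ ^ k : ℝ) - z)⁻¹ := by
  refine Summable.of_norm_bounded
    ((summable_geometric_of_lt_one (by positivity) (inv_lt_one_of_one_lt₀ hρ)).mul_left
      (1 - ‖z‖)⁻¹) fun k => ?_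
  have hρk : 1 ≤ ρ ^ k := one_le_pow₀ hρ.le
  have hlow : ρ ^ k * (1 - ‖z‖) ≤ ‖((ρ ^ k : ℝ) : ℂ) - z‖ := by
    have := norm_sub_norm_le ((ρ ^ k : ℝ) : ℂ) z
    rw [norm_real, Real.norm_of_nonneg (by positivity)] at this
    nlinarith [norm_nonneg z]
  rw [norm_inv, inv_pow, ← mul_inv]
  exact inv_anti₀ (by nlinarith [norm_nonneg z]) (by linarith)

end Complex

noncomputable def annulusTerm (r : ℝ) (z : ℂ) (k : ℤ) : ℂ :=
  (Real.exp (2 * k * r) + z) / (Real.exp (2 * k * r) - z)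

theorem annulusSum_eq_sum_annulusTerm (r : ℝ) (z : ℂ) (N : ℕ) :
    annulusSum r z N = ∑ k ∈ Finset.Icc (-(N : ℤ)) N, annulusTerm r z k := by
  simp only [annulusSum, annulusTerm, ofReal_exp]
  push_cast
  rfl

theorem ofReal_exp_ne_of_norm_eq_exp_neg {r : ℝ} (hr : r ≠ 0) {w : ℂ}
    (hw : ‖w‖ = Real.exp (-r)) (k : ℤ) :
    (Real.exp (2 * k * r) : ℂ) ≠ w := by
  intro h
  have hexp : Real.exp (2 * k * r) = Real.exp (-r) := by
    rw [← hw, ← h, norm_real, Real.norm_of_nonneg (Real.exp_pos _).le]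
  have hodd : ((2 * k + 1 : ℤ) : ℝ) * r = 0 := by
    push_cast
    linarith [Real.exp_injective hexp]
  rcases mul_eq_zero.mp hodd with h | h
  · norm_cast at h
    omega
  · exact hr h

theorem annulusTerm_neg_sub_one {r : ℝ} (hr : r ≠ 0) {z : ℂ} (hz : ‖z‖ = Real.exp (-r))
    (k : ℤ) :
    annulusTerm r z (-(k + 1)) = -conj (annulusTerm r z k) := by
  refine ofReal_add_div_ofReal_sub_of_mul_eq ?_
    (ofReal_exp_ne_of_norm_eq_exp_neg hr (by rwa [norm_conj]) k)
    (ofReal_exp_ne_of_norm_eq_exp_neg hr hz _)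
  rw [hz, ← Real.exp_add, ← Real.exp_nat_mul]
  congr 1
  push_cast
  ring

theorem annulusSum_eq_add_sub_conj {r : ℝ} (hr : r ≠ 0) {z : ℂ} (hz : ‖z‖ = Real.exp (-r))
    (N : ℕ) :
    annulusSum r z N = annulusTerm r z N +
      ((∑ k ∈ Finset.range N, (annulusTerm r z k - 1)) -
        conj (∑ k ∈ Finset.range N, (annulusTerm r z k - 1))) := by
  rw [annulusSum_eq_sum_annulusTerm, Finset.sum_Icc_neg_natCast_eq, map_sum,
    ← Finset.sum_sub_distrib]
  congr 1
  refine Finset.sum_congr rfl fun k _ => ?_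
  rw [annulusTerm_neg_sub_one hr hz, map_sub, map_one]
  ring

theorem summable_annulusTerm_sub_one {r : ℝ} (hr : 0 < r) {z : ℂ}
    (hz : ‖z‖ = Real.exp (-r)) :
    Summable fun k : ℕ => annulusTerm r z k - 1 := by
  have hz1 : ‖z‖ < 1 := hz ▸ Real.exp_lt_one_iff.mpr (neg_neg_of_pos hr)
  have hρ : 1 < Real.exp (2 * r) := Real.one_lt_exp_iff.mpr (by positivity)
  refine ((summable_inv_pow_sub hρ hz1).mul_left (2 * z)).congr fun k => ?_
  have hpow : Real.exp (2 * r) ^ k = Real.exp (2 * (k : ℤ) * r) := by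
    rw [← Real.exp_nat_mul]
    push_cast
    ring_nf
  rw [annulusTerm,
    ofReal_add_div_ofReal_sub_sub_one (ofReal_exp_ne_of_norm_eq_exp_neg hr.ne' hz k), hpow,
    div_eq_mul_inv]

/-- For every `r > 0` and every `z` with `|z| = e^{-r}`, `Re S_r(z) = 1`. -/
theorem stmt1 (r : ℝ) (hr : 0 < r) (z : ℂ) (hz : ‖z‖ = Real.exp (-r)) :
    ∃ S : ℂ, Tendsto (fun N => annulusSum r z N) atTop (𝓝 S) ∧ S.re = 1 := by
  set g : ℕ → ℂ := fun k => annulusTerm r z k - 1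
  have hg : Summable g := summable_annulusTerm_sub_one hr hz
  have hpartial := hg.hasSum.tendsto_sum_nat
  have hterm : Tendsto (fun N : ℕ => annulusTerm r z N) atTop (𝓝 1) := by
    simpa [g] using hg.tendsto_atTop_zero.const_add 1
  refine ⟨1 + ((∑' k, g k) - conj (∑' k, g k)), ?_, by simp [sub_conj]⟩
  simp only [annulusSum_eq_add_sub_conj hr.ne' hz]
  exact hterm.add (hpartial.sub ((continuous_conj.tendsto _).comp hpartial))
end
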